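/- Let Q be a fine sharp additive commutative monoid. Then for every integer c > 0 and every i ≥ 0: (1) Q_c^{(i)} is finitely generated and sharp; (2) the ring homomorphism ℤ[Q_c^{(i)}] → ℤ[Q_c^{(i+1)}] induced by the inclusion Q_c^{(i)} ⊆ Q_c^{(i+1)} makes ℤ[Q_c^{(i+1)}] a finitely generated ℤ[Q_c^{(i)}]-module; (3) writing G_i for the subgroup of G ⊗_ℤ ℚ generated by Q_c^{(i)}, the quotient group G_{i+1}/G_i is a finite abelian group and the composite map Q_c^{(i+1)} → G_{i+1} → G_{i+1}/G_i is surjective; (4) if c = p is a prime, then the order of G_{i+1}/G_i is a power of p. -/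

import Mathlib

universe u v

open scoped TensorProduct

namespace Stmt3

variable {Q : Type u} [AddCommMonoid Q] {G : Type v} [AddCommGroup G]

/-- The submonoid-like subset `Q_ℚ` of `G ⊗_ℤ ℚ` (realized as `ℚ ⊗[ℤ] G`), consisting of
the nonnegative rational multiples of elements of the image of `Q`. -/
noncomputable def QQset (ι : Q →+ G) : Set (ℚ ⊗[ℤ] G) :=
  {x | ∃ (q : Q) (r : ℚ), 0 ≤ r ∧ x = r • ((1 : ℚ) ⊗ₜ[ℤ] ι q)}

/-- The subset `Q_c^{(i)} = {γ ∈ Q_ℚ | c^i • γ ∈ Q}` of `G ⊗_ℤ ℚ`. -/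
noncomputable def Qci (ι : Q →+ G) (c i : ℕ) : Set (ℚ ⊗[ℤ] G) :=
  {γ | γ ∈ QQset ι ∧ (c ^ i) • γ ∈ Set.range (fun q : Q => (1 : ℚ) ⊗ₜ[ℤ] ι q)}

noncomputable def psi (c i : ℕ) : G →+ ℚ ⊗[ℤ] G where
  toFun g := ((c : ℚ) ^ i)⁻¹ • ((1 : ℚ) ⊗ₜ[ℤ] g)
  map_zero' := by simp
  map_add' x y := by
    show ((c : ℚ) ^ i)⁻¹ • ((1 : ℚ) ⊗ₜ[ℤ] (x + y)) = _
    rw [TensorProduct.tmul_add, smul_add]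

lemma psi_apply (c i : ℕ) (g : G) : psi c i g = ((c : ℚ) ^ i)⁻¹ • ((1 : ℚ) ⊗ₜ[ℤ] g) := rfl

lemma nsmul_eq_qsmul (n : ℕ) (γ : ℚ ⊗[ℤ] G) : n • γ = (n : ℚ) • γ :=
  (Nat.cast_smul_eq_nsmul ℚ n γ).symm

lemma psi_smul {c : ℕ} (hc : 0 < c) (i : ℕ) (g : G) : c • psi c (i + 1) g = psi c i g := by
  have hc' : (c : ℚ) ≠ 0 := by exact_mod_cast hc.ne'
  rw [nsmul_eq_qsmul, psi_apply, psi_apply, smul_smul]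
  congr 1
  field_simp
  ring

lemma qci_eq (ι : Q →+ G) {c : ℕ} (hc : 0 < c) (i : ℕ) :
    Qci ι c i = Set.range (fun q : Q => psi c i (ι q)) := by
  have hk : ((c : ℚ) ^ i) ≠ 0 := pow_ne_zero _ (by exact_mod_cast hc.ne')
  have hns : ∀ γ : ℚ ⊗[ℤ] G, (c ^ i) • γ = ((c : ℚ) ^ i) • γ := by
    intro γ; rw [nsmul_eq_qsmul]; norm_cast
  ext γ
  constructor
  · rintro ⟨-, q, hq⟩
    refine ⟨q, ?_⟩
    simp only [psi_apply]
    simp only [] at hq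
    rw [hq, hns, inv_smul_smul₀ hk]
  · rintro ⟨q, rfl⟩
    simp only [psi_apply]
    refine ⟨⟨q, ((c : ℚ) ^ i)⁻¹, by positivity, rfl⟩, ⟨q, ?_⟩⟩
    rw [hns, smul_inv_smul₀ hk]


lemma tmul_eq_zero {g : G} (h : (1 : ℚ) ⊗ₜ[ℤ] g = 0) : ∃ n : ℕ, 0 < n ∧ n • g = 0 := by
  have inst : IsLocalizedModule (nonZeroDivisors ℤ) (TensorProduct.mk ℤ ℚ G 1) :=
    (isLocalizedModule_iff_isBaseChange (nonZeroDivisors ℤ) ℚ _).mpr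
      (TensorProduct.isBaseChange ℤ G ℚ)
  obtain ⟨s, hs⟩ := (IsLocalizedModule.eq_zero_iff (nonZeroDivisors ℤ)
    (TensorProduct.mk ℤ ℚ G 1)).mp h
  refine ⟨(s : ℤ).natAbs, Int.natAbs_pos.mpr (nonZeroDivisors.coe_ne_zero s), ?_⟩
  have hz : ((s : ℤ)) • g = 0 := hs
  rw [← natCast_zsmul]
  rcases Int.natAbs_eq (s : ℤ) with h1 | h1
  · rw [← h1]; exact hz
  · have : (-((s:ℤ).natAbs : ℤ)) • g = 0 := by rw [← h1]; exact hz
    rw [neg_zsmul, neg_eq_zero] at this; exact this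

lemma qci_sharp (ι : Q →+ G) (hι : Function.Injective ι)
    (hsharp : ∀ x y : Q, x + y = 0 → x = 0) {c : ℕ} (hc : 0 < c) (i : ℕ) :
    ∀ x ∈ Qci ι c i, ∀ y ∈ Qci ι c i, x + y = 0 → x = 0 := by
  rw [qci_eq ι hc i]
  rintro _ ⟨q, rfl⟩ _ ⟨q', rfl⟩ hxy
  simp only [] at hxy ⊢
  have hk : (((c : ℚ) ^ i)⁻¹ : ℚ) ≠ 0 := inv_ne_zero (pow_ne_zero _ (by exact_mod_cast hc.ne'))
  have h0 : psi (G := G) c i (ι (q + q')) = 0 := by rw [map_add ι, map_add (psi c i)]; exact hxy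
  rw [psi_apply, smul_eq_zero] at h0
  have h0' : (1 : ℚ) ⊗ₜ[ℤ] (ι (q + q')) = 0 := h0.resolve_left hk
  obtain ⟨n, hn, hng⟩ := tmul_eq_zero h0'
  have h2 : n • (q + q') = 0 := hι (by rw [map_nsmul, map_zero]; exact hng)
  rw [smul_add] at h2
  have h3 : n • q = 0 := hsharp _ _ h2
  have h4 : (1 : ℚ) ⊗ₜ[ℤ] (ι q) = 0 := by
    have h5 : n • ((1 : ℚ) ⊗ₜ[ℤ] (ι q)) = 0 := by
      have h6 := map_nsmul (TensorProduct.mk ℤ ℚ G 1).toAddMonoidHom n (ι q)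
      simp only [LinearMap.toAddMonoidHom_coe, TensorProduct.mk_apply] at h6
      rw [← h6, ← map_nsmul ι, h3, map_zero, TensorProduct.tmul_zero]
    rw [nsmul_eq_qsmul, smul_eq_zero] at h5
    exact h5.resolve_left (by exact_mod_cast hn.ne')
  rw [psi_apply, h4, smul_zero]

lemma qci_fg (ι : Q →+ G) [h : AddMonoid.FG Q] {c : ℕ} (hc : 0 < c) (i : ℕ) :
    ∃ s : Finset (ℚ ⊗[ℤ] G),
      Qci ι c i = ↑(AddSubmonoid.closure (↑s : Set (ℚ ⊗[ℤ] G))) := by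
  classical
  obtain ⟨S, hS⟩ : (⊤ : AddSubmonoid Q).FG := AddMonoid.fg_def.mp h
  refine ⟨S.image (fun q => psi c i (ι q)), ?_⟩
  rw [qci_eq ι hc i, Finset.coe_image]
  have h1 : Set.range (fun q : Q => psi c i (ι q))
      = ↑(AddSubmonoid.map ((psi (G := G) c i).comp ι) ⊤) := by
    rw [AddSubmonoid.coe_map, AddSubmonoid.coe_top, Set.image_univ]; rfl
  rw [h1, ← hS, AddMonoidHom.map_mclosure]
  rfl


lemma mem_subring_closure_single (A : Type u) [AddCommMonoid A] (x : AddMonoidAlgebra ℤ A) :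
    x ∈ Subring.closure (Set.range fun a : A => AddMonoidAlgebra.single a (1 : ℤ)) := by
  refine AddMonoidAlgebra.induction x (zero_mem _) ?_
  intro a b f _ _ ih
  refine add_mem ?_ ih
  have h1 : AddMonoidAlgebra.single a (1 : ℤ) ∈
      Subring.closure (Set.range fun a : A => AddMonoidAlgebra.single a (1 : ℤ)) :=
    Subring.subset_closure ⟨a, rfl⟩
  have h2 := zsmul_mem h1 b
  rwa [AddMonoidAlgebra.smul_single, smul_eq_mul, mul_one] at h2

lemma mapDomain_integral {M M' : AddSubmonoid (ℚ ⊗[ℤ] G)} (h : M ≤ M') {c : ℕ} (hc : 0 < c)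
    (hcs : ∀ g : M', c • (g : ℚ ⊗[ℤ] G) ∈ M) :
    (AddMonoidAlgebra.mapDomainRingHom ℤ (AddSubmonoid.inclusion h)).IsIntegral := by
  intro x
  refine IsIntegral.of_mem_closure''
    (Set.range fun g : ↥M' => AddMonoidAlgebra.single (g : ↥M') (1 : ℤ)) ?_ x
    (mem_subring_closure_single _ x)
  rintro _ ⟨g, rfl⟩
  refine ⟨Polynomial.X ^ c - Polynomial.C (AddMonoidAlgebra.single
      (⟨c • (g : ℚ ⊗[ℤ] G), hcs g⟩ : ↥M) (1 : ℤ)),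
    Polynomial.monic_X_pow_sub_C _ hc.ne', ?_⟩
  have key : (AddSubmonoid.inclusion h) ⟨c • (g : ℚ ⊗[ℤ] G), hcs g⟩ = c • g := by
    ext
    rfl
  have hmap : (AddMonoidAlgebra.mapDomainRingHom ℤ (AddSubmonoid.inclusion h))
      (AddMonoidAlgebra.single (⟨c • (g : ℚ ⊗[ℤ] G), hcs g⟩ : ↥M) (1 : ℤ))
      = AddMonoidAlgebra.single (c • g) (1 : ℤ) := by
    show AddMonoidAlgebra.mapDomain (AddSubmonoid.inclusion h)
        (AddMonoidAlgebra.single (⟨c • (g : ℚ ⊗[ℤ] G), hcs g⟩ : ↥M) (1 : ℤ)) = _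
    rw [AddMonoidAlgebra.mapDomain_single, key]
  rw [Polynomial.eval₂_sub, Polynomial.eval₂_pow, Polynomial.eval₂_X, Polynomial.eval₂_C,
    hmap, AddMonoidAlgebra.single_pow, one_pow, sub_self]


lemma mapDomain_finite {M M' : AddSubmonoid (ℚ ⊗[ℤ] G)} (h : M ≤ M') {c : ℕ} (hc : 0 < c)
    (hfg : AddMonoid.FG ↥M') (hcs : ∀ g : M', c • (g : ℚ ⊗[ℤ] G) ∈ M) :
    RingHom.Finite (AddMonoidAlgebra.mapDomainRingHom ℤ (AddSubmonoid.inclusion h)) := by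
  refine RingHom.IsIntegral.to_finite (mapDomain_integral h hc hcs) ?_
  haveI := hfg
  apply RingHom.FiniteType.of_comp_finiteType (f := Int.castRingHom (AddMonoidAlgebra ℤ ↥M))
  have he : (AddMonoidAlgebra.mapDomainRingHom ℤ (AddSubmonoid.inclusion h)).comp
      (Int.castRingHom (AddMonoidAlgebra ℤ ↥M)) = Int.castRingHom (AddMonoidAlgebra ℤ ↥M') :=
    RingHom.ext_int _ _
  rw [he]
  show @Algebra.FiniteType ℤ (AddMonoidAlgebra ℤ ↥M') _ _ (Int.castRingHom _).toAlgebra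
  have h2 : (Int.castRingHom (AddMonoidAlgebra ℤ ↥M')).toAlgebra
      = (inferInstance : Algebra ℤ (AddMonoidAlgebra ℤ ↥M')) := Subsingleton.elim _ _
  rw [h2]
  infer_instance

lemma closure_qci_eq (ι : Q →+ G) (hgen : AddSubgroup.closure (Set.range ι) = ⊤)
    {c : ℕ} (hc : 0 < c) (i : ℕ) :
    AddSubgroup.closure (Qci ι c i) = (psi (G := G) c i).range := by
  rw [qci_eq ι hc i]
  have h1 : Set.range (fun q : Q => psi c i (ι q)) = ⇑(psi (G := G) c i) '' Set.range ι := by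
    rw [← Set.range_comp]; rfl
  rw [h1, ← AddMonoidHom.map_closure, hgen, ← AddMonoidHom.range_eq_map]


/-- For a fine sharp commutative monoid `Q` with groupification
`ι : Q → G`, and integers `c > 0`, `i ≥ 0`: (1) `Q_c^{(i)}` is a finitely generated
sharp monoid; (2) `ℤ[Q_c^{(i+1)}]` is a finitely generated module over `ℤ[Q_c^{(i)}]`
via the map induced by the inclusion; (3) letting `G_i` be the subgroup of `G ⊗_ℤ ℚ`
generated by `Q_c^{(i)}`, the quotient `G_{i+1}/G_i` is finite and the composite
`Q_c^{(i+1)} → G_{i+1} → G_{i+1}/G_i` is surjective; (4) if `c = p` is prime, the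
order of `G_{i+1}/G_i` is a power of `p`. -/
theorem stmt3 (Q : Type u) [AddCommMonoid Q] [IsCancelAdd Q] [AddMonoid.FG Q]
    (hsharp : ∀ x y : Q, x + y = 0 → x = 0)
    (G : Type v) [AddCommGroup G] (ι : Q →+ G) (hι : Function.Injective ι)
    (hgen : AddSubgroup.closure (Set.range ι) = ⊤)
    (c i : ℕ) (hc : 0 < c) :
    ((∃ s : Finset (ℚ ⊗[ℤ] G),
        Qci ι c i = ↑(AddSubmonoid.closure (↑s : Set (ℚ ⊗[ℤ] G)))) ∧
      (∀ x ∈ Qci ι c i, ∀ y ∈ Qci ι c i, x + y = 0 → x = 0)) ∧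
    (∀ (M M' : AddSubmonoid (ℚ ⊗[ℤ] G)),
      (M : Set (ℚ ⊗[ℤ] G)) = Qci ι c i → (M' : Set (ℚ ⊗[ℤ] G)) = Qci ι c (i + 1) →
      ∀ h : M ≤ M',
        RingHom.Finite (AddMonoidAlgebra.mapDomainRingHom ℤ (AddSubmonoid.inclusion h))) ∧
    (Finite ((AddSubgroup.closure (Qci ι c (i + 1))) ⧸
        ((AddSubgroup.closure (Qci ι c i)).addSubgroupOf
          (AddSubgroup.closure (Qci ι c (i + 1))))) ∧
      ∀ y : (AddSubgroup.closure (Qci ι c (i + 1))) ⧸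
          ((AddSubgroup.closure (Qci ι c i)).addSubgroupOf
            (AddSubgroup.closure (Qci ι c (i + 1)))),
        ∃ x : AddSubgroup.closure (Qci ι c (i + 1)),
          (x : ℚ ⊗[ℤ] G) ∈ Qci ι c (i + 1) ∧ QuotientAddGroup.mk x = y) ∧
    (c.Prime →
      ∃ s : ℕ, Nat.card ((AddSubgroup.closure (Qci ι c (i + 1))) ⧸
          ((AddSubgroup.closure (Qci ι c i)).addSubgroupOf
            (AddSubgroup.closure (Qci ι c (i + 1))))) = c ^ s) := by
  classical
  -- `c`-multiples go down one level
  have hcs : ∀ x ∈ Qci ι c (i + 1), c • x ∈ Qci ι c i := by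
    rw [qci_eq ι hc i, qci_eq ι hc (i + 1)]
    rintro _ ⟨q, rfl⟩
    exact ⟨q, (psi_smul hc i (ι q)).symm⟩
  -- decomposition of elements of G as differences
  have hdiff : ∀ g : G, ∃ a b : Q, g = ι a - ι b := by
    intro g
    have hg : g ∈ AddSubgroup.closure (Set.range ι) := by rw [hgen]; trivial
    induction hg using AddSubgroup.closure_induction with
    | mem x hx => obtain ⟨q, rfl⟩ := hx; exact ⟨q, 0, by simp⟩
    | zero => exact ⟨0, 0, by simp⟩
    | add x y _ _ hx hy =>
      obtain ⟨a, b, rfl⟩ := hx; obtain ⟨a', b', rfl⟩ := hy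
      exact ⟨a + a', b + b', by rw [map_add, map_add]; abel⟩
    | neg x _ hx =>
      obtain ⟨a, b, rfl⟩ := hx
      exact ⟨b, a, by abel⟩
  -- G is finitely generated
  obtain ⟨S, hS⟩ : (⊤ : AddSubmonoid Q).FG := AddMonoid.fg_def.mp ‹_›
  have hGfg : AddGroup.FG G := by
    rw [AddGroup.fg_iff]
    refine ⟨⇑ι '' ↑S, ?_, (S.finite_toSet.image _)⟩
    rw [eq_top_iff, ← hgen]
    refine AddSubgroup.closure_le _ |>.mpr ?_
    rintro _ ⟨q, rfl⟩
    have hq : q ∈ AddSubmonoid.closure (↑S : Set Q) := by rw [hS]; trivial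
    have hle : AddSubmonoid.closure (↑S : Set Q) ≤
        (AddSubgroup.closure (⇑ι '' ↑S)).toAddSubmonoid.comap ι := by
      refine AddSubmonoid.closure_le.mpr ?_
      intro s hs
      exact AddSubgroup.subset_closure ⟨s, hs, rfl⟩
    exact hle hq
  -- set up the quotient machinery
  have e₁ := closure_qci_eq ι hgen hc i
  have e₂ := closure_qci_eq ι hgen hc (i + 1)
  set H₁ := AddSubgroup.closure (Qci ι c i) with hH₁
  set H₂ := AddSubgroup.closure (Qci ι c (i + 1)) with hH₂
  set K := H₁.addSubgroupOf H₂ with hK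
  have hmem₂ : ∀ g : G, psi c (i + 1) g ∈ H₂ := by
    intro g; rw [e₂]; exact ⟨g, rfl⟩
  let ψ' : G →+ ↥H₂ := AddMonoidHom.codRestrict (psi c (i + 1)) H₂ hmem₂
  let π : G →+ ↥H₂ ⧸ K := (QuotientAddGroup.mk' K).comp ψ'
  have hπ : ∀ g : G, π g = QuotientAddGroup.mk (ψ' g) := fun g => rfl
  have hπ_surj : Function.Surjective π := by
    intro y
    induction y using QuotientAddGroup.induction_on with
    | H x =>
      have hx := e₂.le x.2
      obtain ⟨g, hg⟩ := hx
      exact ⟨g, by rw [hπ]; congr 1; exact Subtype.ext hg⟩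
  have htor : ∀ y : ↥H₂ ⧸ K, c • y = 0 := by
    intro y
    obtain ⟨g, rfl⟩ := hπ_surj y
    rw [← map_nsmul, hπ]
    rw [QuotientAddGroup.eq_zero_iff]
    rw [hK, AddSubgroup.mem_addSubgroupOf]
    show psi c (i + 1) (c • g) ∈ H₁
    rw [map_nsmul, psi_smul hc, e₁]
    exact ⟨g, rfl⟩
  have hfin : Finite (↥H₂ ⧸ K) := by
    haveI : AddGroup.FG (↥H₂ ⧸ K) := AddGroup.fg_of_surjective (f := π) hπ_surj
    exact AddCommGroup.finite_of_fg_torsion _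
      (fun y => isOfFinAddOrder_iff_nsmul_eq_zero.mpr ⟨c, hc, htor y⟩)
  refine ⟨⟨qci_fg ι hc i, qci_sharp ι hι hsharp hc i⟩, ?_, ⟨hfin, ?_⟩, ?_⟩
  · -- part 2
    intro M M' hM hM' h
    have hfg : AddMonoid.FG ↥M' := by
      rw [AddMonoid.fg_iff_addSubmonoid_fg]
      obtain ⟨s, hs⟩ := qci_fg ι hc (i + 1)
      exact ⟨s, SetLike.coe_injective (by rw [hM', hs])⟩
    refine mapDomain_finite h hc hfg ?_
    intro g
    have hg : (g : ℚ ⊗[ℤ] G) ∈ Qci ι c (i + 1) := by rw [← hM']; exact g.2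
    have h2 := hcs _ hg
    rw [← SetLike.mem_coe, hM]
    exact h2
  · -- part 3 surjectivity
    intro y
    obtain ⟨g, rfl⟩ := hπ_surj y
    obtain ⟨a, b, rfl⟩ := hdiff g
    have hmemq : psi c (i + 1) (ι (a + (c - 1) • b)) ∈ Qci ι c (i + 1) := by
      rw [qci_eq ι hc (i + 1)]; exact ⟨_, rfl⟩
    refine ⟨⟨psi c (i + 1) (ι (a + (c - 1) • b)), AddSubgroup.subset_closure hmemq⟩,
      hmemq, ?_⟩
    rw [hπ]
    rw [QuotientAddGroup.eq]
    rw [hK, AddSubgroup.mem_addSubgroupOf]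
    have hc1 : (c - 1) • ι b + ι b = c • ι b := by
      rw [← succ_nsmul]
      congr 1
      omega
    have hgG : -(ι (a + (c - 1) • b)) + (ι a - ι b) = -(c • ι b) := by
      rw [map_add, map_nsmul, ← hc1]; abel
    have hcoe : ((-(⟨psi c (i + 1) (ι (a + (c - 1) • b)), AddSubgroup.subset_closure hmemq⟩ : ↥H₂)
        + ψ' (ι a - ι b) : ↥H₂) : ℚ ⊗[ℤ] G) = -(psi c i (ι b)) := by
      show -(psi c (i + 1) (ι (a + (c - 1) • b))) + psi c (i + 1) (ι a - ι b) = _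
      rw [← map_neg, ← map_add, hgG, map_neg, map_nsmul, psi_smul hc]
    show ((_ : ↥H₂) : ℚ ⊗[ℤ] G) ∈ H₁
    rw [hcoe]
    refine neg_mem ?_
    rw [e₁]
    exact ⟨ι b, rfl⟩
  · -- part 4
    intro hp
    haveI : Fact c.Prime := ⟨hp⟩
    haveI := hfin
    haveI : Finite (Multiplicative (↥H₂ ⧸ K)) := Finite.of_equiv _ Multiplicative.ofAdd
    have hP : IsPGroup c (Multiplicative (↥H₂ ⧸ K)) := by
      intro y
      refine ⟨1, ?_⟩
      show y ^ (c ^ 1) = 1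
      rw [pow_one]
      apply Multiplicative.toAdd.injective
      rw [toAdd_pow]
      exact htor _
    obtain ⟨n, hn⟩ := IsPGroup.iff_card.mp hP
    exact ⟨n, by rw [← hn]; exact (Nat.card_congr Multiplicative.toAdd).symm⟩


end Stmt3
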